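/- arXiv:1804.09346 — 2 statements merged into one kernel-verified Lean document; each statement's English description precedes it below -/
import Mathlib

section
/- If a semigroup ⟨A,·⟩ is an inflation of a subsemigroup that is a rectangular band of periodic Abelian groups (Abelian groups in which every element has finite order), and the product of any two idempotents of A is an idempotent, then ⟨A,·⟩ is a Hamiltonian algebra. -/
universe u

/-- A groupoid `⟨A, op⟩` is a Hamiltonian algebra: every subalgebra (nonempty subset
closed under `op`) is an equivalence class of some congruence on `⟨A, op⟩`. -/
def IsHamiltonianGroupoid {A : Type u} (op : A → A → A) : Prop :=
  ∀ B : Set A, B.Nonempty → (∀ x ∈ B, ∀ y ∈ B, op x y ∈ B) →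
    ∃ θ : A → A → Prop, Equivalence θ ∧
      (∀ a b c d : A, θ a b → θ c d → θ (op a c) (op b d)) ∧
      ∃ a : A, B = {x : A | θ x a}

/-- `opPow op a n` is the power `a^(n+1)` of `a` with respect to the operation `op`. -/
def opPow {A : Type u} (op : A → A → A) (a : A) : ℕ → A
  | 0 => a
  | n + 1 => op a (opPow op a n)

/-- The semigroup `⟨A, op⟩` is an inflation of the subsemigroup on `B ⊆ A`:
`B` is closed under `op` and there is a partition `{X b : b ∈ B}` of `A` with
`b ∈ X b` and `x·y = b·b'` whenever `x ∈ X b`, `y ∈ X b'`. -/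
def IsInflation {A : Type u} (op : A → A → A) (B : Set A) : Prop :=
  (∀ x ∈ B, ∀ y ∈ B, op x y ∈ B) ∧
  ∃ X : B → Set A,
    (∀ b : B, (b : A) ∈ X b) ∧
    (∀ a : A, ∃! b : B, a ∈ X b) ∧
    (∀ b b' : B, ∀ x ∈ X b, ∀ y ∈ X b', op x y = op (b : A) (b' : A))

/-- The subset `S` of the semigroup `⟨A, op⟩` is closed under `op` and forms a
periodic Abelian group under `op` (every element has finite order). -/
def IsPeriodicAbelianGroupOn {A : Type u} (op : A → A → A) (S : Set A) : Prop :=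
  (∀ x ∈ S, ∀ y ∈ S, op x y ∈ S) ∧
  ∃ e ∈ S, (∀ x ∈ S, op e x = x ∧ op x e = x) ∧
    (∀ x ∈ S, ∃ y ∈ S, op x y = e) ∧
    (∀ x ∈ S, ∀ y ∈ S, op x y = op y x) ∧
    (∀ x ∈ S, ∃ n : ℕ, opPow op x n = e)

/-- The set `T ⊆ A` equipped with `op` is a rectangular band of periodic Abelian
groups. -/
def IsRectBandOfPeriodicAbelianGroupsOn {A : Type u} (op : A → A → A) (T : Set A) : Prop :=
  ∃ (ι κ : Type u) (P : ι → κ → Set A),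
    (∀ (i : ι) (l : κ), (P i l).Nonempty ∧ P i l ⊆ T) ∧
    (∀ a ∈ T, ∃! p : ι × κ, a ∈ P p.1 p.2) ∧
    (∀ (i : ι) (l : κ), IsPeriodicAbelianGroupOn op (P i l)) ∧
    (∀ (i j : ι) (l m : κ), ∀ x ∈ P i l, ∀ y ∈ P j m, op x y ∈ P i m)

/-- If a semigroup is an inflation of a subsemigroup that is a rectangular band
of periodic Abelian groups, and the product of any two idempotents is an
idempotent, then it is a Hamiltonian algebra. -/
theorem stmt_18 {A : Type u} (op : A → A → A)
    (hassoc : ∀ a b c : A, op (op a b) c = op a (op b c))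
    (T : Set A) (hinf : IsInflation op T)
    (hband : IsRectBandOfPeriodicAbelianGroupsOn op T)
    (hidem : ∀ e f : A, op e e = e → op f f = f → op (op e f) (op e f) = op e f) :
    IsHamiltonianGroupoid op := by
  intro B hBne hBcl
  obtain ⟨hTcl, X, hXmem, hXuniq, hXmul⟩ := hinf
  obtain ⟨ι, κ, P, hPsub, hPuniq, hPgrp, hPrect⟩ := hband
  choose E hEmem hE using fun i l => (hPgrp i l).2
  have hEl : ∀ i l, ∀ x ∈ P i l, op (E i l) x = x := fun i l x hx => ((hE i l).1 x hx).1
  have hEr : ∀ i l, ∀ x ∈ P i l, op x (E i l) = x := fun i l x hx => ((hE i l).1 x hx).2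
  have hEidem : ∀ i l, op (E i l) (E i l) = E i l := fun i l => hEl i l _ (hEmem i l)
  have hcomm : ∀ i l, ∀ x ∈ P i l, ∀ y ∈ P i l, op x y = op y x := fun i l => (hE i l).2.2.1
  have hper : ∀ i l, ∀ x ∈ P i l, ∃ n, opPow op x n = E i l := fun i l => (hE i l).2.2.2
  have hPcl : ∀ i l, ∀ x ∈ P i l, ∀ y ∈ P i l, op x y ∈ P i l := fun i l => (hPgrp i l).1
  have hblk : ∀ a ∈ T, ∃ i l, a ∈ P i l := by
    intro a ha
    obtain ⟨p, hp, -⟩ := hPuniq a ha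
    exact ⟨p.1, p.2, hp⟩
  have hpowP : ∀ i l, ∀ x ∈ P i l, ∀ n, opPow op x n ∈ P i l := by
    intro i l x hx n
    induction n with
    | zero => exact hx
    | succ n ih => exact hPcl i l x hx _ ih
  have hidemuniq : ∀ i l, ∀ x ∈ P i l, op x x = x → x = E i l := by
    intro i l x hx hxx
    obtain ⟨y, hy, hxy⟩ := (hE i l).2.1 x hx
    have h : op x (op x y) = op x y := by rw [← hassoc, hxx]
    rw [hxy, hEr i l x hx] at h
    exact h
  -- L1 : dropping a middle idempotent
  have L1 : ∀ x ∈ T, ∀ y ∈ T, ∀ e ∈ T, op e e = e → op x (op e y) = op x y := by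
    intro x hx y hy e he hee
    obtain ⟨ix, lx, hx'⟩ := hblk x hx
    obtain ⟨iy, ly, hy'⟩ := hblk y hy
    have hfx := hEmem ix lx
    have hfy := hEmem iy ly
    have h1 : op (op (E ix lx) e) (E iy ly) ∈ P ix ly := by
      obtain ⟨ie, le, he'⟩ := hblk e he
      exact hPrect ix iy le ly _ (hPrect ix ie lx le _ hfx _ he') _ hfy
    have e1 : op (op (E ix lx) e) (E iy ly) = E ix ly :=
      hidemuniq _ _ _ h1 (hidem _ _ (hidem _ _ (hEidem ix lx) hee) (hEidem iy ly))
    have e2 : op (E ix lx) (E iy ly) = E ix ly :=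
      hidemuniq _ _ _ (hPrect ix iy lx ly _ hfx _ hfy)
        (hidem _ _ (hEidem ix lx) (hEidem iy ly))
    have e3 : op (op (E ix lx) e) (E iy ly) = op (E ix lx) (E iy ly) := e1.trans e2.symm
    calc op x (op e y)
        = op (op x e) y := (hassoc x e y).symm
      _ = op (op (op x (E ix lx)) e) (op (E iy ly) y) := by
            rw [hEr ix lx x hx', hEl iy ly y hy']
      _ = op (op (op (op x (E ix lx)) e) (E iy ly)) y := (hassoc _ (E iy ly) y).symm
      _ = op (op x (op (op (E ix lx) e) (E iy ly))) y := by
            rw [hassoc x (E ix lx) e, hassoc x (op (E ix lx) e) (E iy ly)]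
      _ = op (op x (op (E ix lx) (E iy ly))) y := by rw [e3]
      _ = op (op (op x (E ix lx)) (E iy ly)) y := by rw [hassoc x (E ix lx) (E iy ly)]
      _ = op (op x (E iy ly)) y := by rw [hEr ix lx x hx']
      _ = op x (op (E iy ly) y) := hassoc x (E iy ly) y
      _ = op x y := by rw [hEl iy ly y hy']
  -- the inflation map β
  have hXuniq' : ∀ a : A, ∃ b : T, a ∈ X b ∧ ∀ b' : T, a ∈ X b' → b' = b := by
    intro a
    obtain ⟨b, hb, hu⟩ := hXuniq a
    exact ⟨b, hb, hu⟩
  choose β hβ hβu using hXuniq'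
  have hβT : ∀ a : A, (β a : A) ∈ T := fun a => (β a).2
  have hmul : ∀ u v : A, op u v = op (β u : A) (β v : A) :=
    fun u v => hXmul (β u) (β v) u (hβ u) v (hβ v)
  have hβid : ∀ t, ∀ ht : t ∈ T, (β t : A) = t := by
    intro t ht
    have h := hβu t ⟨t, ht⟩ (hXmem ⟨t, ht⟩)
    exact (congrArg Subtype.val h).symm
  have hpowT : ∀ t ∈ T, ∀ n, opPow op t n ∈ T := by
    intro t ht n
    induction n with
    | zero => exact ht
    | succ n ih => exact hTcl t ht _ ih
  have hpowβ : ∀ x : A, ∀ m : ℕ, opPow op x (m+1) = opPow op (β x : A) (m+1) := by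
    intro x m
    induction m with
    | zero =>
        show op x (opPow op x 0) = op (β x : A) (opPow op (β x : A) 0)
        simp only [opPow]
        exact hmul x x
    | succ m ih =>
        show op x (opPow op x (m+1)) = op (β x : A) (opPow op (β x : A) (m+1))
        rw [hmul x (opPow op x (m+1)), ih, hβid _ (hpowT _ (hβT x) (m+1))]
  have hpowB : ∀ x ∈ B, ∀ n, opPow op x n ∈ B := by
    intro x hx n
    induction n with
    | zero => exact hx
    | succ n ih => exact hBcl x hx _ ih
  have hβB : ∀ x ∈ B, (β x : A) ∈ B := by
    intro x hx
    obtain ⟨i, l, hbl⟩ := hblk _ (hβT x)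
    obtain ⟨n, hn⟩ := hper i l _ hbl
    have h1 : opPow op (β x : A) (n+1) = (β x : A) := by
      show op (β x : A) (opPow op (β x : A) n) = (β x : A)
      rw [hn]
      exact hEr i l _ hbl
    rw [← h1, ← hpowβ x n]
    exact hpowB x hx (n+1)
  -- inverse of β x inside B
  have hinvC : ∀ x ∈ B, ∀ i l, (β x : A) ∈ P i l →
      ∃ y, y ∈ B ∧ y ∈ P i l ∧ op (β x : A) y = E i l ∧ op y (β x : A) = E i l := by
    intro x hx i l hbl
    obtain ⟨n, hn⟩ := hper i l _ hbl
    cases n with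
    | zero =>
        refine ⟨(β x : A), hβB x hx, hbl, ?_, ?_⟩ <;>
          · show op (β x : A) (β x : A) = E i l
            have hx0 : (β x : A) = E i l := hn
            rw [hx0]; exact hEidem i l
    | succ m =>
        refine ⟨opPow op (β x : A) m, ?_, hpowP i l _ hbl m, hn, ?_⟩
        · exact hpowB _ (hβB x hx) m
        · rw [hcomm i l _ (hpowP i l _ hbl m) _ hbl]
          exact hn
  -- membership of op results in blocks
  have hmulT : ∀ u v : A, op u v ∈ T := by
    intro u v
    rw [hmul]
    exact hTcl _ (hβT u) _ (hβT v)
  -- main lemmas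
  have M1 : ∀ x ∈ B, ∀ y ∈ B, ∀ u : A, op u x ∈ B → op u y ∈ B := by
    intro x hx y hy u hux
    obtain ⟨i, l, hbl⟩ := hblk _ (hβT x)
    obtain ⟨xi, hxiB, hxiP, hxinv, hxinv'⟩ := hinvC x hx i l hbl
    have h2 : op u y = op (op u x) (op xi (β y : A)) := by
      calc op u y = op (β u : A) (β y : A) := hmul u y
        _ = op (β u : A) (op (E i l) (β y : A)) :=
            (L1 _ (hβT u) _ (hβT y) _ ((hPsub i l).2 (hEmem i l)) (hEidem i l)).symm
        _ = op (β u : A) (op (op (β x : A) xi) (β y : A)) := by rw [hxinv]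
        _ = op (op (β u : A) (β x : A)) (op xi (β y : A)) := by
            rw [hassoc (β x : A) xi (β y : A), ← hassoc (β u : A) (β x : A) (op xi (β y : A))]
        _ = op (op u x) (op xi (β y : A)) := by rw [← hmul u x]
    rw [h2]
    exact hBcl _ hux _ (hBcl _ hxiB _ (hβB y hy))
  have M2 : ∀ x ∈ B, ∀ y ∈ B, ∀ v : A, op x v ∈ B → op y v ∈ B := by
    intro x hx y hy v hxv
    obtain ⟨i, l, hbl⟩ := hblk _ (hβT x)
    obtain ⟨xi, hxiB, hxiP, hxinv, hxinv'⟩ := hinvC x hx i l hbl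
    have h2 : op y v = op (op (β y : A) xi) (op x v) := by
      calc op y v = op (β y : A) (β v : A) := hmul y v
        _ = op (β y : A) (op (E i l) (β v : A)) :=
            (L1 _ (hβT y) _ (hβT v) _ ((hPsub i l).2 (hEmem i l)) (hEidem i l)).symm
        _ = op (β y : A) (op (op xi (β x : A)) (β v : A)) := by rw [hxinv']
        _ = op (op (β y : A) xi) (op (β x : A) (β v : A)) := by
            rw [hassoc xi (β x : A) (β v : A), ← hassoc (β y : A) xi (op (β x : A) (β v : A))]
        _ = op (op (β y : A) xi) (op x v) := by rw [← hmul x v]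
    rw [h2]
    exact hBcl _ (hBcl _ (hβB y hy) _ hxiB) _ hxv
  have M3 : ∀ x ∈ B, ∀ y ∈ B, ∀ u v : A, op u (op x v) ∈ B → op u (op y v) ∈ B := by
    intro x hx y hy u v huxv
    obtain ⟨i, l, hbl⟩ := hblk _ (hβT x)
    obtain ⟨xi, hxiB, hxiP, hxinv, hxinv'⟩ := hinvC x hx i l hbl
    obtain ⟨it, lt, hbt⟩ := hblk _ (hβT u)
    obtain ⟨iy, ly, hby⟩ := hblk _ (hβT y)
    obtain ⟨iv, lv, hbv⟩ := hblk _ (hβT v)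
    set t : A := (β u : A) with ht
    set xb : A := (β x : A) with hxb
    set yb : A := (β y : A) with hyb
    set vb : A := (β v : A) with hvb
    have hc : op u (op x v) = op (op t xb) vb := by
      rw [hmul u (op x v), hβid _ (hmulT x v), hmul x v, ← hassoc]
    set c : A := op (op t xb) vb with hcdef
    set w : A := op t xb with hwdef
    set d : A := op xi yb with hddef
    have hwP : w ∈ P it l := hPrect it i lt l _ hbt _ hbl
    have hcP : c ∈ P it lv := hPrect it iv l lv _ hwP _ hbv
    have hdP : d ∈ P i ly := hPrect i iy l ly _ hxiP _ hby
    set fv : A := E iv lv with hfvdef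
    set e : A := E it lv with hedef
    have hfvT : fv ∈ T := (hPsub iv lv).2 (hEmem iv lv)
    have heT : e ∈ T := (hPsub it lv).2 (hEmem it lv)
    have hdT : d ∈ T := (hPsub i ly).2 hdP
    have hwT : w ∈ T := (hPsub it l).2 hwP
    have hcT : c ∈ T := (hPsub it lv).2 hcP
    -- step: op u (op y v) = op w (op d vb)
    have s1 : op u (op y v) = op w (op d vb) := by
      calc op u (op y v) = op t (op yb vb) := by
            rw [hmul u (op y v), hβid _ (hmulT y v), hmul y v]
        _ = op t (op (E i l) (op yb vb)) :=
            (L1 _ (hβT u) _ (hTcl _ (hβT y) _ (hβT v)) _ ((hPsub i l).2 (hEmem i l))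
              (hEidem i l)).symm
        _ = op t (op (op xb xi) (op yb vb)) := by rw [hxinv]
        _ = op w (op xi (op yb vb)) := by
            rw [hassoc xb xi (op yb vb), ← hassoc t xb (op xi (op yb vb))]
        _ = op w (op d vb) := by rw [← hassoc xi yb vb]
    -- sublemma: op fv (op d vb) = op vb (op d fv)
    have hgP : op fv (op d fv) ∈ P iv lv :=
      hPrect iv i lv lv _ (hEmem iv lv) _ (hPrect i iv ly lv _ hdP _ (hEmem iv lv))
    have s2 : op fv (op d vb) = op vb (op d fv) := by
      calc op fv (op d vb) = op fv (op d (op fv vb)) := by rw [hEl iv lv vb hbv]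
        _ = op (op fv (op d fv)) vb := by
            rw [← hassoc d fv vb, ← hassoc fv (op d fv) vb]
        _ = op vb (op fv (op d fv)) := hcomm iv lv _ hgP _ hbv
        _ = op (op vb fv) (op d fv) := by rw [← hassoc vb fv (op d fv)]
        _ = op vb (op d fv) := by rw [hEr iv lv vb hbv]
    -- step: op w (op d vb) = op c (op d fv)
    have s3 : op w (op d vb) = op c (op d fv) := by
      calc op w (op d vb) = op w (op fv (op d vb)) :=
            (L1 _ hwT _ (hTcl _ hdT _ (hβT v)) _ hfvT (hEidem iv lv)).symm
        _ = op w (op vb (op d fv)) := by rw [s2]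
        _ = op c (op d fv) := by rw [← hassoc w vb (op d fv)]
    -- step: op c (op d fv) = op c (op d e)
    have hcdP : op c d ∈ P it ly := hPrect it i lv ly _ hcP _ hdP
    have hpP : op (op c d) fv ∈ P it lv := hPrect it iv ly lv _ hcdP _ (hEmem iv lv)
    have s4 : op c (op d fv) = op c (op d e) := by
      have h1 : op c (op d fv) = op (op c d) fv := (hassoc c d fv).symm
      have h2 : op c (op d e) = op (op (op c d) fv) e := by
        rw [← hassoc c d e]
        rw [(L1 _ ((hPsub it ly).2 hcdP) _ heT _ hfvT (hEidem iv lv)).symm]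
        rw [← hassoc (op c d) fv e]
      rw [h1, h2, hEr it lv _ hpP]
    -- e is a power of c, hence in B
    have heB : e ∈ B := by
      obtain ⟨n, hn⟩ := hper it lv _ hcP
      rw [hedef, ← hn, ← hc]
      exact hpowB _ huxv n
    have hfinal : op u (op y v) = op c (op d e) := by rw [s1, s3, s4]
    rw [hfinal]
    exact hBcl _ (by rw [← hc]; exact huxv) _ (hBcl _ (hBcl _ hxiB _ (hβB y hy)) _ heB)
  -- assemble the congruence
  obtain ⟨a, ha⟩ := hBne
  refine ⟨fun p q => (p ∈ B ↔ q ∈ B) ∧ (∀ u, op u p ∈ B ↔ op u q ∈ B) ∧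
      (∀ v, op p v ∈ B ↔ op q v ∈ B) ∧ (∀ u v, op u (op p v) ∈ B ↔ op u (op q v) ∈ B),
    ⟨fun p => ⟨Iff.rfl, fun _ => Iff.rfl, fun _ => Iff.rfl, fun _ _ => Iff.rfl⟩,
     fun h => ⟨h.1.symm, fun u => (h.2.1 u).symm, fun v => (h.2.2.1 v).symm,
       fun u v => (h.2.2.2 u v).symm⟩,
     fun h h' => ⟨h.1.trans h'.1, fun u => (h.2.1 u).trans (h'.2.1 u),
       fun v => (h.2.2.1 v).trans (h'.2.2.1 v),
       fun u v => (h.2.2.2 u v).trans (h'.2.2.2 u v)⟩⟩,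
    ?_, a, ?_⟩
  · intro p q r s hpq hrs
    refine ⟨(hpq.2.2.1 r).trans (hrs.2.1 q), ?_, ?_, ?_⟩
    · intro u
      have step3' : op u (op q r) ∈ B ↔ op u (op q s) ∈ B := by
        rw [← hassoc u q r, ← hassoc u q s]
        exact hrs.2.1 (op u q)
      exact (hpq.2.2.2 u r).trans step3'
    · intro v
      have s1 : op (op p r) v ∈ B ↔ op (op q r) v ∈ B := by
        rw [hassoc p r v, hassoc q r v]
        exact hpq.2.2.1 (op r v)
      have s2 : op (op q r) v ∈ B ↔ op (op q s) v ∈ B := by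
        rw [hassoc q r v, hassoc q s v]
        exact hrs.2.2.2 q v
      exact s1.trans s2
    · intro u v
      have s1 : op u (op (op p r) v) ∈ B ↔ op u (op (op q r) v) ∈ B := by
        rw [hassoc p r v, hassoc q r v]
        exact hpq.2.2.2 u (op r v)
      have s2 : op u (op (op q r) v) ∈ B ↔ op u (op (op q s) v) ∈ B := by
        rw [hassoc q r v, hassoc q s v, ← hassoc u q (op r v), ← hassoc u q (op s v)]
        exact hrs.2.2.2 (op u q) v
      exact s1.trans s2
  · ext x
    simp only [Set.mem_setOf_eq]
    constructor
    · intro hx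
      exact ⟨⟨fun _ => ha, fun _ => hx⟩, fun u => ⟨M1 x hx a ha u, M1 a ha x hx u⟩,
        fun v => ⟨M2 x hx a ha v, M2 a ha x hx v⟩,
        fun u v => ⟨M3 x hx a ha u v, M3 a ha x hx u v⟩⟩
    · intro hθ
      exact hθ.1.mpr ha
end

section
/- Let ⟨A,·⟩ be a semigroup which is an Abelian algebra. Then ⟨A,·⟩ is a Hamiltonian algebra if and only if ⟨A,·⟩ is an inflation of a subsemigroup that is a rectangular band of periodic Abelian groups (Abelian groups in which every element has finite order) and the product of any two idempotents of A is an idempotent. -/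
/-!
Both sides are equivalent to periodicity. A Hamiltonian semigroup is periodic, since the powers
`a ^ k` with `k = 3` or `k ≥ 5` form a subsemigroup, and an inflation of a band of periodic groups
is periodic. Conversely, let `S` be periodic and Abelian. The term condition lets every `x` act on
both sides like a power `x ^ (p + 1)` (a universal period `p`). Hence every product lies in a
subgroup, `x ↦ x ^ (p + 1)` retracts `S` onto the set `S S` of products, and `S` is an inflation
of it. Again by the term condition, `v e v = v f v` for idempotents `e, f`: the idempotents form a
rectangular band, they can be deleted from products (`x e y = x y`), and elements of one subgroup
commute. So `S S` is a rectangular band of periodic Abelian groups, with rows `x S` and columns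
`S y`. Given a subsemigroup `B` and an idempotent `e ∈ B`, three congruences of `S S` cut out `B`:
same row after merging the rows that meet `B`, same column likewise, and same coset of `e B e` in
the Abelian group `e S e`. Gluing them with the inflation gives a congruence of `S` with `B` as a
class.
-/

universe u

/-- Terms (polynomial operations) of a groupoid `⟨A, op⟩` in `n` variables,
built from variables, constants and the binary operation. -/
inductive GTerm (A : Type u) (n : ℕ) : Type u where
  | var : Fin n → GTerm A n
  | const : A → GTerm A n
  | mul : GTerm A n → GTerm A n → GTerm A n

/-- Evaluation of a term under the binary operation `op` and an assignment of variables. -/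
def GTerm.eval {A : Type u} (op : A → A → A) : {n : ℕ} → GTerm A n → (Fin n → A) → A
  | _, .var i, v => v i
  | _, .const a, _ => a
  | _, .mul s t, v => op (GTerm.eval op s v) (GTerm.eval op t v)

/-- A groupoid `⟨A, op⟩` is an Abelian algebra: for every polynomial operation
`t(x, y₁, …, yₙ)` and all elements `u, v, c₁, …, cₙ, d₁, …, dₙ`,
`t(u, c̄) = t(u, d̄)` implies `t(v, c̄) = t(v, d̄)`. -/
def IsAbelianGroupoid {A : Type u} (op : A → A → A) : Prop :=
  ∀ (n : ℕ) (t : GTerm A (n + 1)) (u v : A) (c d : Fin n → A),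
    t.eval op (Fin.cons u c) = t.eval op (Fin.cons u d) →
    t.eval op (Fin.cons v c) = t.eval op (Fin.cons v d)

section Powers

theorem opPow_succ {S : Type*} [Mul S] (a : S) (n : ℕ) :
    opPow (· * ·) a (n + 1) = a * opPow (· * ·) a n := rfl

variable {S : Type*} [Semigroup S]

theorem opPow_mul_opPow (a : S) (m n : ℕ) :
    opPow (· * ·) a m * opPow (· * ·) a n = opPow (· * ·) a (m + n + 1) := by
  induction m with
  | zero => rw [Nat.zero_add]; rfl
  | succ m ih => rw [opPow_succ, mul_assoc, ih, Nat.add_right_comm m 1 n]; rfl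

theorem opPow_mem {B : Subsemigroup S} {a : S} (ha : a ∈ B) (n : ℕ) :
    opPow (· * ·) a n ∈ B := by
  induction n with
  | zero => exact ha
  | succ n ih => exact B.mul_mem ha ih

theorem mul_opPow_of_mul_eq {c z : S} (h : c * z = z) (n : ℕ) :
    c * opPow (· * ·) z n = opPow (· * ·) z n := by
  cases n with
  | zero => exact h
  | succ n => rw [opPow_succ, ← mul_assoc, h]

theorem opPow_mul_of_mul_eq {c z : S} (h : z * c = z) (n : ℕ) :
    opPow (· * ·) z n * c = opPow (· * ·) z n := by
  induction n with
  | zero => exact h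
  | succ n ih => rw [opPow_succ, mul_assoc, ih]

theorem mul_opPow_mul (x y : S) (n : ℕ) :
    x * opPow (· * ·) (y * x) n * y = opPow (· * ·) (x * y) (n + 1) := by
  induction n with
  | zero => simp only [opPow, mul_assoc]
  | succ n ih => rw [opPow_succ, opPow_succ, ← ih]; simp only [mul_assoc]

end Powers

namespace IsAbelianGroupoid

variable {S : Type*} [Semigroup S] {e f : S}

theorem transfer_mul_left (hS : IsAbelianGroupoid (· * · : S → S → S)) {u c d : S}
    (h : u * c = u * d) (v : S) : v * c = v * d := by
  have key := hS 1 (.mul (.var 0) (.var 1)) u v ![c] ![d]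
  simp only [GTerm.eval, Fin.cons_zero, Fin.cons_one] at key
  exact key h

theorem transfer_mul_right (hS : IsAbelianGroupoid (· * · : S → S → S)) {u c d : S}
    (h : c * u = d * u) (v : S) : c * v = d * v := by
  have key := hS 1 (.mul (.var 1) (.var 0)) u v ![c] ![d]
  simp only [GTerm.eval, Fin.cons_zero, Fin.cons_one] at key
  exact key h

theorem transfer_mid (hS : IsAbelianGroupoid (· * · : S → S → S)) {u c₁ c₂ d₁ d₂ : S}
    (h : c₁ * u * c₂ = d₁ * u * d₂) (v : S) : c₁ * v * c₂ = d₁ * v * d₂ := by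
  have key := hS 2 (.mul (.mul (.var 1) (.var 0)) (.var 2)) u v ![c₁, c₂] ![d₁, d₂]
  simp only [GTerm.eval, Fin.cons_zero, Fin.cons_one] at key
  exact key h

theorem transfer_conj (hS : IsAbelianGroupoid (· * · : S → S → S)) {u c d : S}
    (h : u * c * u = u * d * u) (v : S) : v * c * v = v * d * v := by
  have key := hS 1 (.mul (.mul (.var 0) (.var 1)) (.var 0)) u v ![c] ![d]
  simp only [GTerm.eval, Fin.cons_zero, Fin.cons_one] at key
  exact key h

theorem transfer_mul_left_mul (hS : IsAbelianGroupoid (· * · : S → S → S)) (w : S) {u c d : S}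
    (h : u * c * w = u * d * w) (v : S) : v * c * w = v * d * w := by
  have key := hS 1 (.mul (.mul (.var 0) (.var 1)) (.const w)) u v ![c] ![d]
  simp only [GTerm.eval, Fin.cons_zero, Fin.cons_one] at key
  exact key h

theorem conj_isIdempotentElem_eq (hS : IsAbelianGroupoid (· * · : S → S → S))
    (he : IsIdempotentElem e) (hf : IsIdempotentElem f) (v : S) :
    v * e * v = v * f * v := by
  refine hS.transfer_conj (u := e * f) ?_ v
  calc e * f * e * (e * f) = e * f * (e * f) := by
        simp only [mul_assoc, he.eq, ← mul_assoc e e]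
    _ = e * f * f * (e * f) := by rw [mul_assoc e f f, hf.eq]

theorem mul_mul_cancel_of_isIdempotentElem (hS : IsAbelianGroupoid (· * · : S → S → S))
    (he : IsIdempotentElem e) (hf : IsIdempotentElem f) : e * f * e = e := by
  rw [← hS.conj_isIdempotentElem_eq he hf e, he.eq, he.eq]

theorem isIdempotentElem_mul (hS : IsAbelianGroupoid (· * · : S → S → S))
    (he : IsIdempotentElem e) (hf : IsIdempotentElem f) : IsIdempotentElem (e * f) := by
  rw [IsIdempotentElem, mul_assoc, ← mul_assoc f, hS.mul_mul_cancel_of_isIdempotentElem hf he]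

theorem mul_isIdempotentElem_mul_congr (hS : IsAbelianGroupoid (· * · : S → S → S))
    (he : IsIdempotentElem e) (hf : IsIdempotentElem f) (x y : S) :
    x * e * y = x * f * y := by
  refine hS.transfer_mul_left_mul y (u := x * y) ?_ x
  simp only [mul_assoc, hS.conj_isIdempotentElem_eq he hf y]

end IsAbelianGroupoid

def IsPeriodic (S : Type*) [Mul S] : Prop :=
  ∀ a : S, ∃ m p, 0 < p ∧ opPow (· * ·) a (m + p) = opPow (· * ·) a m

structure IsPeriodicAbelian (S : Type*) [Semigroup S] : Prop where
  isAbelian : IsAbelianGroupoid (· * · : S → S → S)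
  isPeriodic : IsPeriodic S

def productSet (S : Type*) [Mul S] : Set S := {z | ∃ x y, x * y = z}

section productSet

variable {S : Type*} [Semigroup S] {z w : S}

theorem mul_mem_productSet (x y : S) : x * y ∈ productSet S := ⟨x, y, rfl⟩

theorem mem_productSet_of_dvd (h : z ∣ w) : w ∈ productSet S := by
  obtain ⟨c, rfl⟩ := h
  exact mul_mem_productSet z c

theorem mem_productSet_of_rightDvd (h : z ∣ᵣ w) : w ∈ productSet S := by
  obtain ⟨c, rfl⟩ := h
  exact mul_mem_productSet c z

end productSet

/-- `S` is an inflation of `T` along the retraction `r`. -/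
structure IsInflationRetraction {S : Type*} [Mul S] (T : Set S) (r : S → S) : Prop where
  mul_mem : ∀ x ∈ T, ∀ y ∈ T, x * y ∈ T
  map_mem : ∀ x, r x ∈ T
  map_of_mem : ∀ z ∈ T, r z = z
  mul_eq : ∀ x y, x * y = r x * r y

theorem IsInflationRetraction.isInflation {S : Type*} [Mul S] {T : Set S} {r : S → S}
    (h : IsInflationRetraction T r) : IsInflation (· * ·) T :=
  ⟨h.mul_mem, fun b => {a | r a = b}, fun b => h.map_of_mem b b.2,
    fun a => ⟨⟨r a, h.map_mem a⟩, rfl, fun _ hb => Subtype.ext hb.symm⟩,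
    fun _ _ x hx y hy => (h.mul_eq x y).trans (congrArg₂ (· * ·) hx hy)⟩

structure IsCongruenceOn {S : Type*} [Mul S] (T : Set S) (θ : S → S → Prop) : Prop where
  refl : ∀ x ∈ T, θ x x
  symm : ∀ {x y}, x ∈ T → y ∈ T → θ x y → θ y x
  trans : ∀ {x y z}, x ∈ T → y ∈ T → z ∈ T → θ x y → θ y z → θ x z
  mul : ∀ {x y u v}, x ∈ T → y ∈ T → u ∈ T → v ∈ T → θ x y → θ u v → θ (x * u) (y * v)

theorem IsCongruenceOn.and {S : Type*} [Mul S] {T : Set S} {θ₁ θ₂ : S → S → Prop}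
    (h₁ : IsCongruenceOn T θ₁) (h₂ : IsCongruenceOn T θ₂) :
    IsCongruenceOn T (fun x y => θ₁ x y ∧ θ₂ x y) where
  refl x hx := ⟨h₁.refl x hx, h₂.refl x hx⟩
  symm hx hy h := ⟨h₁.symm hx hy h.1, h₂.symm hx hy h.2⟩
  trans hx hy hz h h' := ⟨h₁.trans hx hy hz h.1 h'.1, h₂.trans hx hy hz h.2 h'.2⟩
  mul hx hy hu hv h h' := ⟨h₁.mul hx hy hu hv h.1 h'.1, h₂.mul hx hy hu hv h.2 h'.2⟩

/-- Glue the congruence of `T` with equality off `T`, and merge `B` into one class. -/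
theorem IsInflationRetraction.exists_con_eq_setOf {S : Type*} [Mul S] {T : Set S} {r : S → S}
    (hr : IsInflationRetraction T r) {B : Set S} (hBr : ∀ x ∈ B, r x ∈ B)
    {θ : S → S → Prop} (hθ : IsCongruenceOn T θ) {b : S} (hbT : b ∈ T)
    (hclass : ∀ x ∈ T, θ x b ↔ x ∈ B) : ∃ c : Con S, B = {x | c x b} := by
  have hbB : b ∈ B := (hclass b hbT).1 (hθ.refl b hbT)
  have merge : ∀ {x y}, x ∈ B → x ∈ T → y ∈ T → θ x y → y ∈ B := fun hxB hxT hyT hxy =>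
    (hclass _ hyT).1 (hθ.trans hyT hxT hbT (hθ.symm hxT hyT hxy) ((hclass _ hxT).2 hxB))
  let ρ x y := x = y ∨ (x ∈ B ∧ y ∈ B) ∨ (x ∈ T ∧ y ∈ T ∧ θ x y)
  have hρr : ∀ {x y}, ρ x y → θ (r x) (r y) := by
    rintro x y (rfl | ⟨hx, hy⟩ | ⟨hx, hy, h⟩)
    · exact hθ.refl _ (hr.map_mem x)
    · exact hθ.trans (hr.map_mem x) hbT (hr.map_mem y) ((hclass _ (hr.map_mem x)).2 (hBr x hx))
        (hθ.symm (hr.map_mem y) hbT ((hclass _ (hr.map_mem y)).2 (hBr y hy)))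
    · rwa [hr.map_of_mem x hx, hr.map_of_mem y hy]
  let c : Con S :=
    { r := ρ
      iseqv := by
        refine ⟨fun x => Or.inl rfl, ?_, ?_⟩
        · rintro x y (rfl | ⟨hx, hy⟩ | ⟨hx, hy, h⟩)
          exacts [Or.inl rfl, Or.inr (Or.inl ⟨hy, hx⟩), Or.inr (Or.inr ⟨hy, hx, hθ.symm hx hy h⟩)]
        · rintro x y z (rfl | ⟨hx, hy⟩ | ⟨hx, hy, h⟩) (rfl | ⟨hy', hz⟩ | ⟨hy', hz, h'⟩)
          · exact Or.inl rfl
          · exact Or.inr (Or.inl ⟨hy', hz⟩)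
          · exact Or.inr (Or.inr ⟨hy', hz, h'⟩)
          · exact Or.inr (Or.inl ⟨hx, hy⟩)
          · exact Or.inr (Or.inl ⟨hx, hz⟩)
          · exact Or.inr (Or.inl ⟨hx, merge hy hy' hz h'⟩)
          · exact Or.inr (Or.inr ⟨hx, hy, h⟩)
          · exact Or.inr (Or.inl ⟨merge hy' hy hx (hθ.symm hx hy h), hz⟩)
          · exact Or.inr (Or.inr ⟨hx, hz, hθ.trans hx hy hz h h'⟩)
      mul' := fun {x y u v} h h' => by
        refine Or.inr (Or.inr ⟨hr.mul_eq x u ▸ hr.mul_mem _ (hr.map_mem x) _ (hr.map_mem u),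
          hr.mul_eq y v ▸ hr.mul_mem _ (hr.map_mem y) _ (hr.map_mem v), ?_⟩)
        rw [hr.mul_eq x u, hr.mul_eq y v]
        exact hθ.mul (hr.map_mem x) (hr.map_mem y) (hr.map_mem u) (hr.map_mem v) (hρr h)
          (hρr h') }
  refine ⟨c, Set.ext fun x => ⟨fun hx => Or.inr (Or.inl ⟨hx, hbB⟩), ?_⟩⟩
  rintro (rfl | ⟨hx, -⟩ | ⟨hx, -, h⟩)
  exacts [hbB, hx, (hclass x hx).1 h]

/-- Same coset of `φ B` after applying `φ`. -/
def cosetRel {S M : Type*} [Mul S] [Mul M] (B : Set S) (φ : S →ₙ* M) (x y : S) : Prop :=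
  ∃ c ∈ B, ∃ d ∈ B, φ (x * c) = φ (y * d)

theorem isCongruenceOn_cosetRel {S M : Type*} [Mul S] [Semigroup M] {B : Subsemigroup S}
    {b : S} (hb : b ∈ B) (φ : S →ₙ* M) (hφ : ∀ x y, Commute (φ x) (φ y)) (T : Set S) :
    IsCongruenceOn T (cosetRel B φ) where
  refl _ _ := ⟨b, hb, b, hb, rfl⟩
  symm _ _ := fun ⟨c, hc, d, hd, h⟩ => ⟨d, hd, c, hc, h.symm⟩
  trans _ _ _ := fun ⟨c, hc, d, hd, h⟩ ⟨c', hc', d', hd', h'⟩ =>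
    ⟨c * c', B.mul_mem hc hc', d' * d, B.mul_mem hd' hd, by
      simp only [map_mul] at h h' ⊢
      rw [← mul_assoc, h, mul_assoc, (hφ d c').eq, ← mul_assoc, h', mul_assoc]⟩
  mul {_ _ u v} _ _ _ _ := fun ⟨c, hc, d, hd, h⟩ ⟨c', hc', d', hd', h'⟩ =>
    ⟨c * c', B.mul_mem hc hc', d * d', B.mul_mem hd hd', by
      simp only [map_mul] at h h' ⊢
      rw [(hφ u c).mul_mul_mul_comm, h, h', ← (hφ v d).mul_mul_mul_comm]⟩

section Relations

variable {S : Type*} [Semigroup S]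

/-- Same row, after merging all rows that meet `B`. -/
def rowRel (B : Set S) (x y : S) : Prop := x ∣ y ∨ (∃ b ∈ B, b ∣ x) ∧ ∃ b ∈ B, b ∣ y

/-- Same column, after merging all columns that meet `B`. -/
def colRel (B : Set S) (x y : S) : Prop := x ∣ᵣ y ∨ (∃ b ∈ B, b ∣ᵣ x) ∧ ∃ b ∈ B, b ∣ᵣ y

end Relations

namespace IsPeriodicAbelian

variable {S : Type*} [Semigroup S] {x z w e : S}

def IsUniversalPeriod (x : S) (p : ℕ) : Prop :=
  0 < p ∧ ∀ v, v * x = v * opPow (· * ·) x p ∧ x * v = opPow (· * ·) x p * v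

theorem exists_isUniversalPeriod (hS : IsPeriodicAbelian S) (x : S) :
    ∃ p, IsUniversalPeriod x p := by
  obtain ⟨m, p, hp, hmp⟩ := hS.isPeriodic x
  refine ⟨p, hp, fun v => ?_⟩
  cases m with
  | zero => rw [Nat.zero_add] at hmp; rw [hmp]; exact ⟨rfl, rfl⟩
  | succ k =>
    have hL : opPow (· * ·) x k * opPow (· * ·) x p = opPow (· * ·) x k * x := by
      rw [opPow_mul_opPow, show k + p + 1 = k + 1 + p by omega, hmp]
      exact (opPow_mul_opPow x k 0).symm
    have hR : opPow (· * ·) x p * opPow (· * ·) x k = x * opPow (· * ·) x k := by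
      rw [opPow_mul_opPow, ← opPow_succ, ← hmp]
      congr 1
      omega
    exact ⟨(hS.isAbelian.transfer_mul_left hL v).symm,
      (hS.isAbelian.transfer_mul_right hR v).symm⟩

/-- The least universal period; the junk value `0` if there is none. -/
noncomputable def period (x : S) : ℕ := sInf {p | IsUniversalPeriod x p}

/-- The identity of the subgroup containing `z`, for `z ∈ productSet S`. -/
noncomputable def idem (z : S) : S := opPow (· * ·) z (period z - 1)

/-- The inverse of `z` in the subgroup containing it, for `z ∈ productSet S`. -/
noncomputable def inv (z : S) : S := opPow (· * ·) z (2 * (period z - 1))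

noncomputable def retract (x : S) : S := opPow (· * ·) x (period x)

theorem isUniversalPeriod_period (hS : IsPeriodicAbelian S) (x : S) :
    IsUniversalPeriod x (period x) :=
  Nat.sInf_mem (hS.exists_isUniversalPeriod x)

theorem period_pos (hS : IsPeriodicAbelian S) (x : S) : 0 < period x :=
  (hS.isUniversalPeriod_period x).1

theorem mul_opPow_period_add (hS : IsPeriodicAbelian S) (x v : S) (n : ℕ) :
    v * opPow (· * ·) x (period x + n) = v * opPow (· * ·) x n := by
  induction n generalizing v with
  | zero => exact (((hS.isUniversalPeriod_period x).2 v).1).symm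
  | succ n ih => rw [← Nat.add_assoc, opPow_succ, ← mul_assoc, ih, mul_assoc, ← opPow_succ]

theorem opPow_period_of_mem (hS : IsPeriodicAbelian S) (hz : z ∈ productSet S) :
    opPow (· * ·) z (period z) = z := by
  obtain ⟨x, y, rfl⟩ := hz
  obtain ⟨q, hq⟩ := Nat.exists_eq_add_one_of_ne_zero (hS.period_pos (x * y)).ne'
  set z := x * y with hz
  have hW : x * (y * opPow (· * ·) z q) = opPow (· * ·) z q * x * (y * opPow (· * ·) z q) := by
    calc x * (y * opPow (· * ·) z q) = z * opPow (· * ·) z (period z + q) := by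
          rw [hS.mul_opPow_period_add, ← mul_assoc]
      _ = opPow (· * ·) z q * (z * opPow (· * ·) z q) := by
          rw [← opPow_succ, ← opPow_succ, opPow_mul_opPow, hq]
          congr 1
          omega
      _ = opPow (· * ·) z q * x * (y * opPow (· * ·) z q) := by simp only [hz, mul_assoc]
  calc opPow (· * ·) z (period z) = opPow (· * ·) z q * opPow (· * ·) z 0 := by
        rw [opPow_mul_opPow, hq]
    _ = opPow (· * ·) z q * x * y := by rw [mul_assoc]; rfl
    _ = z := (hS.isAbelian.transfer_mul_right hW y).symm

theorem opPow_period_add (hS : IsPeriodicAbelian S) (hz : z ∈ productSet S) (n : ℕ) :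
    opPow (· * ·) z (period z + n) = opPow (· * ·) z n := by
  induction n with
  | zero => exact hS.opPow_period_of_mem hz
  | succ n ih => rw [← Nat.add_assoc, opPow_succ, ih, opPow_succ]

theorem opPow_eq_of_eq_period_add (hS : IsPeriodicAbelian S) (hz : z ∈ productSet S)
    {m n : ℕ} (h : m = period z + n) : opPow (· * ·) z m = opPow (· * ·) z n :=
  h ▸ hS.opPow_period_add hz n

theorem isIdempotentElem_idem (hS : IsPeriodicAbelian S) (hz : z ∈ productSet S) :
    IsIdempotentElem (idem z) :=
  have := hS.period_pos z
  (opPow_mul_opPow z (period z - 1) _).trans (hS.opPow_eq_of_eq_period_add hz (by omega))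

theorem idem_mul_of_mem (hS : IsPeriodicAbelian S) (hz : z ∈ productSet S) : idem z * z = z :=
  have := hS.period_pos z
  (opPow_mul_opPow z (period z - 1) 0).trans
    (hS.opPow_eq_of_eq_period_add hz (n := 0) (by omega))

theorem mul_idem_of_mem (hS : IsPeriodicAbelian S) (hz : z ∈ productSet S) : z * idem z = z :=
  have := hS.period_pos z
  (opPow_mul_opPow z 0 (period z - 1)).trans
    (hS.opPow_eq_of_eq_period_add hz (n := 0) (by omega))

theorem mul_inv_of_mem (hS : IsPeriodicAbelian S) (hz : z ∈ productSet S) :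
    z * inv z = idem z :=
  have := hS.period_pos z
  (opPow_mul_opPow z 0 (2 * (period z - 1))).trans (hS.opPow_eq_of_eq_period_add hz (by omega))

theorem inv_mul_of_mem (hS : IsPeriodicAbelian S) (hz : z ∈ productSet S) :
    inv z * z = idem z :=
  have := hS.period_pos z
  (opPow_mul_opPow z (2 * (period z - 1)) 0).trans (hS.opPow_eq_of_eq_period_add hz (by omega))

theorem idem_mul_inv (hS : IsPeriodicAbelian S) (hz : z ∈ productSet S) :
    idem z * inv z = inv z :=
  mul_opPow_of_mul_eq (hS.idem_mul_of_mem hz) _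

theorem inv_mul_idem (hS : IsPeriodicAbelian S) (hz : z ∈ productSet S) :
    inv z * idem z = inv z :=
  opPow_mul_of_mul_eq (hS.mul_idem_of_mem hz) _

theorem dvd_self_of_mem (hS : IsPeriodicAbelian S) (hz : z ∈ productSet S) : z ∣ z :=
  Dvd.intro _ (hS.mul_idem_of_mem hz)

theorem rightDvd_self_of_mem (hS : IsPeriodicAbelian S) (hz : z ∈ productSet S) : z ∣ᵣ z :=
  ⟨_, (hS.idem_mul_of_mem hz).symm⟩

theorem dvd_inv (hS : IsPeriodicAbelian S) (hz : z ∈ productSet S) : z ∣ inv z :=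
  Dvd.intro (inv z * inv z) <| by rw [← mul_assoc, hS.mul_inv_of_mem hz, hS.idem_mul_inv hz]

theorem rightDvd_inv (hS : IsPeriodicAbelian S) (hz : z ∈ productSet S) : z ∣ᵣ inv z :=
  ⟨inv z * inv z, by rw [mul_assoc, hS.inv_mul_of_mem hz, hS.inv_mul_idem hz]⟩

theorem idem_mul_of_dvd (hS : IsPeriodicAbelian S) (hz : z ∈ productSet S) (h : z ∣ w) :
    idem w * z = z := by
  have hw := mem_productSet_of_dvd h
  obtain ⟨u, rfl⟩ := h
  have hef : idem z * idem (z * u) = idem (z * u) :=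
    mul_opPow_of_mul_eq (by rw [← mul_assoc, hS.idem_mul_of_mem hz]) _
  have hfe : idem (z * u) * idem z = idem z := by
    conv_lhs => rw [← hef]
    exact hS.isAbelian.mul_mul_cancel_of_isIdempotentElem (hS.isIdempotentElem_idem hz)
      (hS.isIdempotentElem_idem hw)
  calc idem (z * u) * z = idem (z * u) * (idem z * z) := by rw [hS.idem_mul_of_mem hz]
    _ = z := by rw [← mul_assoc, hfe, hS.idem_mul_of_mem hz]

theorem mul_idem_of_rightDvd (hS : IsPeriodicAbelian S) (hz : z ∈ productSet S) (h : z ∣ᵣ w) :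
    z * idem w = z := by
  have hw := mem_productSet_of_rightDvd h
  obtain ⟨u, rfl⟩ := h
  have hfe : idem (u * z) * idem z = idem (u * z) :=
    opPow_mul_of_mul_eq (by rw [mul_assoc, hS.mul_idem_of_mem hz]) _
  have hef : idem z * idem (u * z) = idem z := by
    conv_lhs => rw [← hfe, ← mul_assoc]
    exact hS.isAbelian.mul_mul_cancel_of_isIdempotentElem (hS.isIdempotentElem_idem hz)
      (hS.isIdempotentElem_idem hw)
  calc z * idem (u * z) = z * idem z * idem (u * z) := by rw [hS.mul_idem_of_mem hz]
    _ = z := by rw [mul_assoc, hef, hS.mul_idem_of_mem hz]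

theorem dvd_symm_of_mem (hS : IsPeriodicAbelian S) (hz : z ∈ productSet S) (h : z ∣ w) :
    w ∣ z :=
  Dvd.intro (inv w * z) <| by
    rw [← mul_assoc, hS.mul_inv_of_mem (mem_productSet_of_dvd h), hS.idem_mul_of_dvd hz h]

theorem rightDvd_symm_of_mem (hS : IsPeriodicAbelian S) (hz : z ∈ productSet S) (h : z ∣ᵣ w) :
    w ∣ᵣ z :=
  ⟨z * inv w, by
    rw [mul_assoc, hS.inv_mul_of_mem (mem_productSet_of_rightDvd h),
      hS.mul_idem_of_rightDvd hz h]⟩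

theorem idem_eq_of_dvd_of_rightDvd (hS : IsPeriodicAbelian S) (hz : z ∈ productSet S)
    (h₁ : z ∣ w) (h₂ : z ∣ᵣ w) : idem z = idem w := by
  have hw := mem_productSet_of_dvd h₁
  have hfe : idem w * idem z = idem z := by
    rw [← hS.mul_inv_of_mem hz, ← mul_assoc, hS.idem_mul_of_dvd hz h₁]
  have hef : idem z * idem w = idem z := by
    rw [← hS.inv_mul_of_mem hz, mul_assoc, hS.mul_idem_of_rightDvd hz h₂]
  rw [← hS.isAbelian.mul_mul_cancel_of_isIdempotentElem (hS.isIdempotentElem_idem hw)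
    (hS.isIdempotentElem_idem hz), hfe, hef]

/-- Replace `e` by the idempotent power of `y * x`; then `x * e * y` becomes a power of `x * y`,
which the term condition shows to be `x * y` itself. -/
theorem mul_isIdempotentElem_mul (hS : IsPeriodicAbelian S) (he : IsIdempotentElem e)
    (x y : S) : x * e * y = x * y := by
  have hyx := mul_mem_productSet y x
  have hxy := mul_mem_productSet x y
  obtain ⟨q, hq⟩ := Nat.exists_eq_add_one_of_ne_zero (hS.period_pos (y * x)).ne'
  have hsq : x * y * opPow (· * ·) (x * y) (q + 1) = x * y * (x * y) := by
    rw [← opPow_succ, ← mul_opPow_mul, ← hq, hS.opPow_period_of_mem hyx]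
    simp only [mul_assoc]
  have hcube := hS.isAbelian.transfer_mul_left hsq (idem (x * y))
  rw [mul_opPow_of_mul_eq (hS.idem_mul_of_mem hxy), hS.idem_mul_of_mem hxy] at hcube
  rw [hS.isAbelian.mul_isIdempotentElem_mul_congr he (hS.isIdempotentElem_idem hyx), idem, hq,
    Nat.add_sub_cancel, mul_opPow_mul, hcube]

theorem commute_of_idem_eq (hS : IsPeriodicAbelian S) (hz : z ∈ productSet S)
    (hw : w ∈ productSet S) (h : idem z = idem w) : Commute z w := by
  have key : z * inv z * w = w * inv z * z := by
    rw [hS.mul_inv_of_mem hz, mul_assoc, hS.inv_mul_of_mem hz, h, hS.idem_mul_of_mem hw,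
      hS.mul_idem_of_mem hw]
  have := hS.isAbelian.transfer_mid key (idem z)
  rwa [hS.mul_idem_of_mem hz, mul_assoc, hS.idem_mul_of_mem hz] at this

theorem isInflationRetraction_retract (hS : IsPeriodicAbelian S) :
    IsInflationRetraction (productSet S) retract where
  mul_mem x _ y _ := mul_mem_productSet x y
  map_mem x := by
    obtain ⟨q, hq⟩ := Nat.exists_eq_add_one_of_ne_zero (hS.period_pos x).ne'
    rw [retract, hq]
    exact mul_mem_productSet _ _
  map_of_mem _ := hS.opPow_period_of_mem
  mul_eq x y :=
    ((hS.isUniversalPeriod_period x).2 y).2.trans ((hS.isUniversalPeriod_period y).2 _).1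

theorem retract_mem {B : Subsemigroup S} (hx : x ∈ B) : retract x ∈ B := opPow_mem hx _

theorem retract_dvd_of_dvd (hS : IsPeriodicAbelian S) {b : S} (h : b ∣ x) : retract b ∣ x := by
  obtain ⟨u, rfl⟩ := h
  exact Dvd.intro (retract u) (hS.isInflationRetraction_retract.mul_eq b u).symm

theorem retract_rightDvd_of_rightDvd (hS : IsPeriodicAbelian S) {b : S} (h : b ∣ᵣ x) :
    retract b ∣ᵣ x := by
  obtain ⟨u, rfl⟩ := h
  exact ⟨retract u, hS.isInflationRetraction_retract.mul_eq u b⟩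

theorem setOf_dvd_eq (hS : IsPeriodicAbelian S) (hx : x ∈ productSet S) (h : x ∣ z) :
    {w | x ∣ w} = {w | z ∣ w} :=
  Set.ext fun _ => ⟨(hS.dvd_symm_of_mem hx h).trans, h.trans⟩

theorem setOf_rightDvd_eq (hS : IsPeriodicAbelian S) (hx : x ∈ productSet S) (h : x ∣ᵣ z) :
    {w | x ∣ᵣ w} = {w | z ∣ᵣ w} :=
  Set.ext fun _ => ⟨(hS.rightDvd_symm_of_mem hx h).trans, h.trans⟩

theorem isPeriodicAbelianGroupOn_row_inter_col (hS : IsPeriodicAbelian S) {c : S}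
    (hc : c ∈ productSet S) :
    IsPeriodicAbelianGroupOn (· * ·) ({w | c ∣ w} ∩ {w | c ∣ᵣ w}) := by
  have idem_eq : ∀ z ∈ {w | c ∣ w} ∩ {w | c ∣ᵣ w}, idem z = idem c := fun z hz =>
    (hS.idem_eq_of_dvd_of_rightDvd hc hz.1 hz.2).symm
  refine ⟨fun z hz w hw => ⟨hz.1.mul_right w, hw.2.mul_left z⟩, idem c,
    ⟨Dvd.intro _ (hS.mul_inv_of_mem hc), ⟨_, (hS.inv_mul_of_mem hc).symm⟩⟩,
    fun z hz => ?_, fun z hz => ?_, fun z hz w hw => ?_, fun z hz => ⟨_, idem_eq z hz⟩⟩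
  · have hzT := mem_productSet_of_dvd hz.1
    rw [← idem_eq z hz]
    exact ⟨hS.idem_mul_of_mem hzT, hS.mul_idem_of_mem hzT⟩
  · have hzT := mem_productSet_of_dvd hz.1
    exact ⟨inv z, ⟨hz.1.trans (hS.dvd_inv hzT), hz.2.trans (hS.rightDvd_inv hzT)⟩,
      (hS.mul_inv_of_mem hzT).trans (idem_eq z hz)⟩
  · exact (hS.commute_of_idem_eq (mem_productSet_of_dvd hz.1) (mem_productSet_of_dvd hw.1)
      ((idem_eq z hz).trans (idem_eq w hw).symm)).eq

/-- Rows are the principal right ideals `x S`, columns the principal left ideals `S y`, and the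
group at `(x S, S y)` is their intersection. -/
theorem isRectBandOfPeriodicAbelianGroupsOn_productSet {S : Type u} [Semigroup S]
    (hS : IsPeriodicAbelian S) : IsRectBandOfPeriodicAbelianGroupsOn (· * ·) (productSet S) := by
  refine ⟨Set.range fun x : productSet S => {w | (x : S) ∣ w},
    Set.range fun y : productSet S => {w | (y : S) ∣ᵣ w}, fun i l => (i : Set S) ∩ l,
    ?_, ?_, ?_, ?_⟩
  · rintro ⟨_, ⟨x, rfl⟩⟩ ⟨_, ⟨y, rfl⟩⟩
    exact ⟨⟨x * y, dvd_mul_right _ _, RightDvd.mul_self _ _⟩,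
      fun w hw => mem_productSet_of_dvd hw.1⟩
  · intro a ha
    refine ⟨(⟨_, ⟨a, ha⟩, rfl⟩, ⟨_, ⟨a, ha⟩, rfl⟩),
      ⟨hS.dvd_self_of_mem ha, hS.rightDvd_self_of_mem ha⟩, ?_⟩
    rintro ⟨⟨_, ⟨x, rfl⟩⟩, ⟨_, ⟨y, rfl⟩⟩⟩ ⟨hxa, hya⟩
    exact Prod.ext (Subtype.ext (hS.setOf_dvd_eq x.2 hxa))
      (Subtype.ext (hS.setOf_rightDvd_eq y.2 hya))
  · rintro ⟨_, ⟨x, rfl⟩⟩ ⟨_, ⟨y, rfl⟩⟩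
    simp only
    rw [hS.setOf_dvd_eq x.2 (dvd_mul_right _ (y : S)),
      hS.setOf_rightDvd_eq y.2 (RightDvd.mul_self _ (x : S))]
    exact hS.isPeriodicAbelianGroupOn_row_inter_col (mul_mem_productSet _ _)
  · rintro ⟨_, ⟨x, rfl⟩⟩ _ _ ⟨_, ⟨y, rfl⟩⟩ z ⟨hz, -⟩ w ⟨-, hw⟩
    exact ⟨hz.mul_right w, hw.mul_left z⟩

noncomputable def sandwichHom (hS : IsPeriodicAbelian S) (he : IsIdempotentElem e) :
    S →ₙ* S where
  toFun x := e * x * e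
  map_mul' x y := by
    rw [show e * x * e * (e * y * e) = e * x * (e * e) * (y * e) by simp only [mul_assoc], he.eq,
      hS.mul_isIdempotentElem_mul he]
    simp only [mul_assoc]

theorem sandwichHom_apply (hS : IsPeriodicAbelian S) (he : IsIdempotentElem e) (x : S) :
    hS.sandwichHom he x = e * x * e := rfl

theorem idem_sandwichHom (hS : IsPeriodicAbelian S) (he : IsIdempotentElem e) (x : S) :
    idem (hS.sandwichHom he x) = e := by
  have hx : hS.sandwichHom he x ∈ productSet S := mul_mem_productSet _ _
  have hl : e * idem (hS.sandwichHom he x) = idem (hS.sandwichHom he x) :=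
    mul_opPow_of_mul_eq (by simp only [sandwichHom_apply, ← mul_assoc, he.eq]) _
  have hr : idem (hS.sandwichHom he x) * e = idem (hS.sandwichHom he x) :=
    opPow_mul_of_mul_eq (by simp only [sandwichHom_apply, mul_assoc, he.eq]) _
  calc idem (hS.sandwichHom he x) = e * idem (hS.sandwichHom he x) * e := by rw [hl, hr]
    _ = e := hS.isAbelian.mul_mul_cancel_of_isIdempotentElem he (hS.isIdempotentElem_idem hx)

theorem commute_sandwichHom (hS : IsPeriodicAbelian S) (he : IsIdempotentElem e) (x y : S) :
    Commute (hS.sandwichHom he x) (hS.sandwichHom he y) :=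
  hS.commute_of_idem_eq (mul_mem_productSet _ _) (mul_mem_productSet _ _)
    (by rw [idem_sandwichHom, idem_sandwichHom])

theorem mul_sandwichHom_mul (hS : IsPeriodicAbelian S) (he : IsIdempotentElem e)
    (a x b : S) : a * hS.sandwichHom he x * b = a * x * b := by
  rw [sandwichHom_apply, ← mul_assoc, ← mul_assoc, hS.mul_isIdempotentElem_mul he, mul_assoc,
    hS.mul_isIdempotentElem_mul he, mul_assoc]

/-- `x` is rebuilt from its row, its column and its coordinate in the subgroup at `e`. -/
theorem eq_idem_mul_mul_idem (hS : IsPeriodicAbelian S) (he : IsIdempotentElem e)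
    (hx : x ∈ productSet S) {b₁ b₂ m : S} (hb₁T : b₁ ∈ productSet S) (hb₂T : b₂ ∈ productSet S)
    (hb₁x : b₁ ∣ x) (hb₂x : b₂ ∣ᵣ x) (hφ : hS.sandwichHom he x = hS.sandwichHom he m) :
    x = idem b₁ * m * idem b₂ := by
  have h₁ : idem x * idem b₁ = idem b₁ := mul_opPow_of_mul_eq (hS.idem_mul_of_dvd hb₁T hb₁x) _
  have h₂ : idem b₂ * idem x = idem b₂ :=
    opPow_mul_of_mul_eq (hS.mul_idem_of_rightDvd hb₂T hb₂x) _
  calc x = idem x * x * idem x := by rw [hS.idem_mul_of_mem hx, hS.mul_idem_of_mem hx]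
    _ = idem x * m * idem x := by rw [← hS.mul_sandwichHom_mul he, hφ, hS.mul_sandwichHom_mul]
    _ = idem b₁ * m * idem b₂ := by
      rw [← hS.mul_isIdempotentElem_mul (hS.isIdempotentElem_idem hb₁T) (idem x) m, h₁,
        ← hS.mul_isIdempotentElem_mul (hS.isIdempotentElem_idem hb₂T) (idem b₁ * m) (idem x),
        mul_assoc _ (idem b₂), h₂]

theorem isCongruenceOn_rowRel (hS : IsPeriodicAbelian S) (B : Set S) :
    IsCongruenceOn (productSet S) (rowRel B) where
  refl x hx := Or.inl (hS.dvd_self_of_mem hx)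
  symm hx _ := fun
    | .inl h => .inl (hS.dvd_symm_of_mem hx h)
    | .inr ⟨h₁, h₂⟩ => .inr ⟨h₂, h₁⟩
  trans hx _ _ := fun
    | .inl h, .inl h' => .inl (h.trans h')
    | .inl h, .inr ⟨⟨b, hb, hby⟩, h'⟩ => .inr ⟨⟨b, hb, hby.trans (hS.dvd_symm_of_mem hx h)⟩, h'⟩
    | .inr ⟨h, ⟨b, hb, hby⟩⟩, .inl h' => .inr ⟨h, ⟨b, hb, hby.trans h'⟩⟩
    | .inr ⟨h, _⟩, .inr ⟨_, h'⟩ => .inr ⟨h, h'⟩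
  mul {x y u v} hx _ _ _ h _ := by
    rcases h with h | ⟨⟨b, hb, hbx⟩, ⟨b', hb', hby⟩⟩
    · exact .inl <| (hS.dvd_symm_of_mem hx (dvd_mul_right x u)).trans
        (h.trans (dvd_mul_right y v))
    · exact .inr ⟨⟨b, hb, hbx.mul_right u⟩, ⟨b', hb', hby.mul_right v⟩⟩

theorem isCongruenceOn_colRel (hS : IsPeriodicAbelian S) (B : Set S) :
    IsCongruenceOn (productSet S) (colRel B) where
  refl x hx := Or.inl (hS.rightDvd_self_of_mem hx)
  symm hx _ := fun
    | .inl h => .inl (hS.rightDvd_symm_of_mem hx h)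
    | .inr ⟨h₁, h₂⟩ => .inr ⟨h₂, h₁⟩
  trans hx _ _ := fun
    | .inl h, .inl h' => .inl (h.trans h')
    | .inl h, .inr ⟨⟨b, hb, hby⟩, h'⟩ =>
      .inr ⟨⟨b, hb, hby.trans (hS.rightDvd_symm_of_mem hx h)⟩, h'⟩
    | .inr ⟨h, ⟨b, hb, hby⟩⟩, .inl h' => .inr ⟨h, ⟨b, hb, hby.trans h'⟩⟩
    | .inr ⟨h, _⟩, .inr ⟨_, h'⟩ => .inr ⟨h, h'⟩
  mul {x y u v} _ _ hu _ _ h := by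
    rcases h with h | ⟨⟨b, hb, hbu⟩, ⟨b', hb', hbv⟩⟩
    · exact .inl <| (hS.rightDvd_symm_of_mem hu (RightDvd.mul_self u x)).trans
        (h.trans (RightDvd.mul_self v y))
    · exact .inr ⟨⟨b, hb, hbu.mul_left x⟩, ⟨b', hb', hbv.mul_left y⟩⟩

theorem rowRel_colRel_cosetRel_iff (hS : IsPeriodicAbelian S) {B : Subsemigroup S} {b : S}
    (hb : b ∈ B) (hbT : b ∈ productSet S) (hx : x ∈ productSet S) :
    (rowRel B x b ∧ colRel B x b ∧
      cosetRel B (hS.sandwichHom (hS.isIdempotentElem_idem hbT)) x b) ↔ x ∈ B := by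
  have he := hS.isIdempotentElem_idem hbT
  have hTr := hS.isInflationRetraction_retract
  constructor
  · rintro ⟨hrow, hcol, c, hc, d, hd, hcd⟩
    obtain ⟨b₁, hb₁, hb₁T, hb₁x⟩ : ∃ b₁ ∈ B, b₁ ∈ productSet S ∧ b₁ ∣ x := by
      rcases hrow with h | ⟨⟨b', hb', h⟩, -⟩
      · exact ⟨b, hb, hbT, hS.dvd_symm_of_mem hx h⟩
      · exact ⟨retract b', retract_mem hb', hTr.map_mem b', hS.retract_dvd_of_dvd h⟩
    obtain ⟨b₂, hb₂, hb₂T, hb₂x⟩ : ∃ b₂ ∈ B, b₂ ∈ productSet S ∧ b₂ ∣ᵣ x := by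
      rcases hcol with h | ⟨⟨b', hb', h⟩, -⟩
      · exact ⟨b, hb, hbT, hS.rightDvd_symm_of_mem hx h⟩
      · exact ⟨retract b', retract_mem hb', hTr.map_mem b', hS.retract_rightDvd_of_rightDvd h⟩
    have hcT := hTr.map_mem c
    set m := b * d * inv (retract c)
    have hm : m ∈ B := B.mul_mem (B.mul_mem hb hd) (opPow_mem (retract_mem hc) _)
    have hxc : x * c = x * retract c := by rw [hTr.mul_eq x c, hTr.map_of_mem x hx]
    have hφ : hS.sandwichHom he x = hS.sandwichHom he m := by
      rw [map_mul, ← hcd, hxc, ← map_mul, mul_assoc, hS.mul_inv_of_mem hcT, sandwichHom_apply,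
        sandwichHom_apply, ← mul_assoc, hS.mul_isIdempotentElem_mul (hS.isIdempotentElem_idem hcT)]
    rw [hS.eq_idem_mul_mul_idem he hx hb₁T hb₂T hb₁x hb₂x hφ]
    exact B.mul_mem (B.mul_mem (opPow_mem hb₁ _) hm) (opPow_mem hb₂ _)
  · intro hxB
    refine ⟨.inr ⟨⟨x, hxB, hS.dvd_self_of_mem hx⟩, ⟨b, hb, hS.dvd_self_of_mem hbT⟩⟩,
      .inr ⟨⟨x, hxB, hS.rightDvd_self_of_mem hx⟩, ⟨b, hb, hS.rightDvd_self_of_mem hbT⟩⟩,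
      b, hb, x, hxB, ?_⟩
    rw [map_mul, map_mul, (hS.commute_sandwichHom he x b).eq]

theorem isHamiltonianGroupoid (hS : IsPeriodicAbelian S) :
    IsHamiltonianGroupoid (· * · : S → S → S) := by
  rintro B ⟨b, hb⟩ hBmul
  let B' : Subsemigroup S := ⟨B, fun hx hy => hBmul _ hx _ hy⟩
  have hb' : retract b ∈ B' := retract_mem (B := B') hb
  have hTr := hS.isInflationRetraction_retract
  have hbT := hTr.map_mem b
  have he := hS.isIdempotentElem_idem hbT
  obtain ⟨c, hc⟩ := hTr.exists_con_eq_setOf (B := B') (fun _ => retract_mem)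
    ((hS.isCongruenceOn_rowRel B).and ((hS.isCongruenceOn_colRel B).and
      (isCongruenceOn_cosetRel hb' (hS.sandwichHom he) (hS.commute_sandwichHom he)
        (productSet S))))
    hbT (fun _ hx => hS.rowRel_colRel_cosetRel_iff hb' hbT hx)
  exact ⟨c, c.iseqv, fun _ _ _ _ => c.mul, _, hc⟩

end IsPeriodicAbelian

section Periodicity

variable {S : Type*}

/-- The powers `a ^ 3, a ^ 5, a ^ 6, …` form a subsemigroup. If it is a congruence class, then
`a ^ 3 ≡ a ^ 5` gives `a ^ 4 ≡ a ^ 6`, so `a ^ 4` is one of these powers. -/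
theorem IsHamiltonianGroupoid.isPeriodic [Semigroup S]
    (h : IsHamiltonianGroupoid (· * · : S → S → S)) : IsPeriodic S := by
  intro a
  obtain ⟨θ, hθ, hmul, c, hc⟩ := h {x | ∃ k, (k = 2 ∨ 4 ≤ k) ∧ opPow (· * ·) a k = x}
    ⟨_, 2, Or.inl rfl, rfl⟩ (by
      rintro _ ⟨k, hk, rfl⟩ _ ⟨l, hl, rfl⟩
      exact ⟨k + l + 1, by omega, (opPow_mul_opPow a k l).symm⟩)
  have hθc : ∀ k, (k = 2 ∨ 4 ≤ k) → θ (opPow (· * ·) a k) c := fun k hk => by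
    have : opPow (· * ·) a k ∈ {x | θ x c} := hc ▸ ⟨k, hk, rfl⟩
    exact this
  have h3 : opPow (· * ·) a 3 ∈ {x | θ x c} :=
    hθ.trans (hmul a a _ _ (hθ.refl a) (hθ.trans (hθc 2 (by omega)) (hθ.symm (hθc 4 (by omega)))))
      (hθc 5 (by omega))
  obtain ⟨k, hk, hk3⟩ := hc ▸ h3
  rcases hk with rfl | hk
  · exact ⟨2, 1, one_pos, hk3.symm⟩
  · exact ⟨3, k - 3, by omega, by rw [Nat.add_sub_cancel' (by omega), hk3]⟩

theorem IsInflation.exists_opPow_eq [Mul S] {T : Set S} (hT : IsInflation (· * ·) T) (a : S) :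
    ∃ b ∈ T, ∀ n, opPow (· * ·) a (n + 1) = opPow (· * ·) b (n + 1) := by
  obtain ⟨-, X, hXmem, hXuniq, hXmul⟩ := hT
  obtain ⟨b, hab, -⟩ := hXuniq a
  have hleft : ∀ y, a * y = b * y := fun y => by
    obtain ⟨b', hy, -⟩ := hXuniq y
    exact (hXmul b b' a hab y hy).trans (hXmul b b' b (hXmem b) y hy).symm
  have hright : ∀ y, y * a = y * b := fun y => by
    obtain ⟨b', hy, -⟩ := hXuniq y
    exact (hXmul b' b y hy a hab).trans (hXmul b' b y hy b (hXmem b)).symm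
  refine ⟨b, b.2, fun n => ?_⟩
  induction n with
  | zero => exact (hleft a).trans (hright b)
  | succ n ih => rw [opPow_succ, ih, hleft, ← opPow_succ]

theorem IsRectBandOfPeriodicAbelianGroupsOn.exists_isIdempotentElem_opPow {S : Type u} [Mul S]
    {T : Set S} (hT : IsRectBandOfPeriodicAbelianGroupsOn (· * ·) T) {b : S} (hb : b ∈ T) :
    ∃ n, IsIdempotentElem (opPow (· * ·) b n) := by
  obtain ⟨_, _, P, -, hPuniq, hPgrp, -⟩ := hT
  obtain ⟨⟨i, l⟩, hbP, -⟩ := hPuniq b hb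
  obtain ⟨-, e, he, hunit, -, -, hper⟩ := hPgrp i l
  obtain ⟨n, hn⟩ := hper b hbP
  exact ⟨n, hn ▸ (hunit e he).1⟩

theorem IsInflation.isPeriodic {S : Type u} [Semigroup S] {T : Set S}
    (hT : IsInflation (· * ·) T) (hR : IsRectBandOfPeriodicAbelianGroupsOn (· * ·) T) :
    IsPeriodic S := by
  intro a
  obtain ⟨b, hb, hab⟩ := hT.exists_opPow_eq a
  obtain ⟨n, hn⟩ := hR.exists_isIdempotentElem_opPow hb
  refine ⟨n + 1, n + 1, n.succ_pos, ?_⟩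
  rw [show n + 1 + (n + 1) = n + n + 1 + 1 by omega, hab, hab, opPow_succ, ← opPow_mul_opPow,
    hn.eq, opPow_succ]

end Periodicity

/-- An Abelian semigroup is a Hamiltonian algebra iff it is an inflation of a
subsemigroup that is a rectangular band of periodic Abelian groups and the
product of any two idempotents is an idempotent. -/
theorem stmt_19 {A : Type u} (op : A → A → A)
    (hassoc : ∀ a b c : A, op (op a b) c = op a (op b c))
    (hab : IsAbelianGroupoid op) :
    IsHamiltonianGroupoid op ↔
      ((∃ T : Set A, IsInflation op T ∧ IsRectBandOfPeriodicAbelianGroupsOn op T) ∧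
       (∀ e f : A, op e e = e → op f f = f → op (op e f) (op e f) = op e f)) := by
  let _ : Semigroup A := { mul := op, mul_assoc := hassoc }
  constructor
  · intro hH
    have hS : IsPeriodicAbelian A := ⟨hab, IsHamiltonianGroupoid.isPeriodic hH⟩
    exact ⟨⟨productSet A, hS.isInflationRetraction_retract.isInflation,
      hS.isRectBandOfPeriodicAbelianGroupsOn_productSet⟩,
      fun _ _ => IsAbelianGroupoid.isIdempotentElem_mul hab⟩
  · rintro ⟨⟨T, hT, hR⟩, -⟩
    exact IsPeriodicAbelian.isHamiltonianGroupoid ⟨hab, hT.isPeriodic hR⟩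
end
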